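/- For a finite topological space X, the following are equivalent: (i) X is connected; (ii) X is order-connected (any two points can be joined by a fence, i.e., a finite sequence in which consecutive elements are comparable in the specialization preorder); (iii) X is path-connected. -/

import Mathlib

/-- The specialization preorder: `x ≤ y` iff `x` lies in every open set containing `y`. -/
def specLE {X : Type*} [TopologicalSpace X] (x y : X) : Prop :=
  ∀ U : Set X, IsOpen U → y ∈ U → x ∈ U

/-- A fence from `x` to `y`: a finite sequence starting at `x` and ending at `y` in which
consecutive elements are comparable in the specialization preorder. -/
def Fence {X : Type*} [TopologicalSpace X] (x y : X) : Prop :=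
  ∃ (n : ℕ) (c : Fin (n + 1) → X), c 0 = x ∧ c (Fin.last n) = y ∧
    ∀ i : Fin n, specLE (c i.castSucc) (c i.succ) ∨ specLE (c i.succ) (c i.castSucc)

/-!
A fence is a walk in the comparability graph of the specialization preorder `⤳`. Such walks
always give paths, since `x ⤳ y` makes the map `[0, 1] → X` that is `x` on `[0, 1)` and `y` at
`1` continuous. Conversely, in a finite space every intersection of open sets is open, so a set
is open as soon as it is closed under generalization; the points reachable from `x` by a fence
form a set closed under generalization and specialization, hence clopen, hence everything when
the space is connected.
-/

namespace Relation

theorem reflTransGen_iff_exists_fin {α : Type*} {r : α → α → Prop} {x y : α} :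
    ReflTransGen r x y ↔ ∃ (n : ℕ) (c : Fin (n + 1) → α), c 0 = x ∧ c (Fin.last n) = y ∧
      ∀ i : Fin n, r (c i.castSucc) (c i.succ) := by
  constructor
  · intro h
    induction h using ReflTransGen.head_induction_on with
    | refl => exact ⟨0, fun _ => y, rfl, rfl, Fin.elim0⟩
    | head hxz _ ih =>
      obtain ⟨n, c, hc0, hcn, hstep⟩ := ih
      refine ⟨n + 1, Fin.cons _ c, rfl, by simpa [← Fin.succ_last] using hcn, ?_⟩
      intro i
      cases i using Fin.cases with
      | zero => simpa [hc0] using hxz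
      | succ j => simpa [← Fin.succ_castSucc] using hstep j
  · rintro ⟨n, c, rfl, rfl, hstep⟩
    induction n with
    | zero => rfl
    | succ n ih =>
      exact .head (hstep 0) (ih (Fin.tail c) fun i => by simpa [Fin.tail] using hstep i.succ)

end Relation

section Specialization

variable {X : Type*} [TopologicalSpace X]

theorem fence_iff_reflTransGen {x y : X} :
    Fence x y ↔ Relation.ReflTransGen (fun a b : X => a ⤳ b ∨ b ⤳ a) x y := by
  simp only [Fence, specLE, ← specializes_iff_forall_open, Relation.reflTransGen_iff_exists_fin]

theorem Specializes.joined {x y : X} (h : x ⤳ y) : Joined x y :=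
  joinedIn_univ.mp (h.joinedIn (Set.mem_univ x) (Set.mem_univ y))

theorem Relation.ReflTransGen.joined_of_specializes_or_specializes {x y : X}
    (h : Relation.ReflTransGen (fun a b : X => a ⤳ b ∨ b ⤳ a) x y) : Joined x y := by
  induction h with
  | refl => exact Joined.refl x
  | tail _ hbc ih => exact ih.trans (hbc.elim Specializes.joined fun h => h.joined.symm)

theorem AlexandrovDiscrete.isClopen_of_forall_specializes [AlexandrovDiscrete X] {s : Set X}
    (hs : ∀ x y, x ⤳ y → (x ∈ s ↔ y ∈ s)) : IsClopen s :=
  ⟨isOpen_compl_iff.mp <| isOpen_iff_forall_specializes.mpr fun x y hxy hy hx =>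
      hy ((hs x y hxy).mp hx),
    isOpen_iff_forall_specializes.mpr fun x y hxy hy => (hs x y hxy).mpr hy⟩

theorem AlexandrovDiscrete.reflTransGen_specializes_or_specializes [AlexandrovDiscrete X]
    [PreconnectedSpace X] (x y : X) :
    Relation.ReflTransGen (fun a b : X => a ⤳ b ∨ b ⤳ a) x y := by
  set reachable := {z | Relation.ReflTransGen (fun a b : X => a ⤳ b ∨ b ⤳ a) x z}
  have hclopen : IsClopen reachable :=
    isClopen_of_forall_specializes fun a b hab => ⟨fun ha => ha.tail (.inl hab),
      fun hb => hb.tail (.inr hab)⟩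
  exact Set.eq_univ_iff_forall.mp (hclopen.eq_univ ⟨x, .refl⟩) y

end Specialization

/-- For a (nonempty) finite topological space, connectedness, order-connectedness and
path-connectedness are equivalent. -/
theorem finite_space_connected_iff_orderConnected_iff_pathConnected
    (X : Type*) [TopologicalSpace X] [Finite X] [Nonempty X] :
    (ConnectedSpace X ↔ ∀ x y : X, Fence x y) ∧
    (ConnectedSpace X ↔ PathConnectedSpace X) := by
  have fences_of_connected (_ : ConnectedSpace X) (x y : X) : Fence x y :=
    fence_iff_reflTransGen.mpr (AlexandrovDiscrete.reflTransGen_specializes_or_specializes x y)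
  have pathConnected_of_fences (h : ∀ x y : X, Fence x y) : PathConnectedSpace X :=
    ⟨inferInstance, fun x y =>
      (fence_iff_reflTransGen.mp (h x y)).joined_of_specializes_or_specializes⟩
  exact ⟨⟨fences_of_connected, fun h => (pathConnected_of_fences h).connectedSpace⟩,
    ⟨fun h => pathConnected_of_fences (fences_of_connected h), fun h => h.connectedSpace⟩⟩
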